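/- arXiv:2405.10007 — 2 statements merged into one kernel-verified Lean document; each statement's English description precedes it below -/
import Mathlib

section
/- Let Ω₁ ∈ (0, π), t ∈ ℝ, g ∈ [Ω₁, π] with e^{igt} = 1, and define E(ω) = e^{iωt} for |ω| ≤ g and E(ω) = e^{igt} = 1 for g < |ω| ≤ π. Let a_k = (1/2π)∫_{−π}^{π} E(ω)e^{−ikω} dω. Then for every ω ∈ [−Ω₁, Ω₁], the series ∑_{k∈ℤ} a_k e^{ikω} converges absolutely to e^{iωt}. -/
/-!
Since `e^{igt} = 1`, the function `E` is continuous with `E(-π) = E(π) = 1`, and it has a right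
derivative everywhere, equal to `i t e^{iωt}` on `[-g, g)` and to `0` elsewhere. Integrating by
parts, the `n`-th Fourier coefficient of `E` is that of this bounded derivative divided by `i n`;
by Parseval and `|c| / |n| ≤ (|c|² + 1/n²) / 2` the coefficients are absolutely summable, so the
Fourier series of `E` converges to `E` everywhere, and `E ω = e^{iωt}` for `|ω| ≤ Ω₁ ≤ g`.
-/

open scoped Real
open Set MeasureTheory Filter Topology Complex

theorem hasSum_fourierCoeffOn_of_summable {a b : ℝ} (hab : a < b) {f : ℝ → ℂ}
    (hf : ContinuousOn f (Icc a b)) (hfab : f a = f b) (hsum : Summable (fourierCoeffOn hab f))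
    {x : ℝ} (hx : x ∈ Icc a b) :
    HasSum (fun n => fourierCoeffOn hab f n • fourier n (x : AddCircle (b - a))) (f x) := by
  have := Fact.mk (sub_pos.2 hab)
  have hb : a + (b - a) = b := add_sub_cancel a b
  let F : C(AddCircle (b - a), ℂ) :=
    ⟨AddCircle.liftIoc (b - a) a f, AddCircle.liftIoc_continuous (by rwa [hb]) (by rwa [hb])⟩
  have hFx : F x = f x := by
    rcases hx.1.eq_or_lt with rfl | hax
    · rw [hfab, ← AddCircle.coe_add_period (b - a) a, hb]
      exact AddCircle.liftIoc_coe_apply (by rw [hb]; exact ⟨hab, le_rfl⟩)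
    · exact AddCircle.liftIoc_coe_apply (by rw [hb]; exact ⟨hax, hx.2⟩)
  rw [← hFx]
  exact has_pointwise_sum_fourier_series_of_summable (f := F) hsum x

theorem summable_norm_fourierCoeffOn_of_hasDeriv_right {a b : ℝ} (hab : a < b)
    {f f' : ℝ → ℂ} (hf : ContinuousOn f (Icc a b)) (hfab : f a = f b)
    (hff' : ∀ x ∈ Ioo a b, HasDerivWithinAt f (f' x) (Ioi x) x)
    (hf' : MemLp f' 2 (volume.restrict (Ioc a b))) :
    Summable fun n => ‖fourierCoeffOn hab f n‖ := by
  have hf'int : IntervalIntegrable f' volume a b :=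
    (intervalIntegrable_iff_integrableOn_Ioc_of_le hab.le).2 (hf'.integrable one_le_two)
  set C := (b - a) / (2 * π)
  have hbound : ∀ n : ℤ, n ≠ 0 → ‖fourierCoeffOn hab f n‖
      ≤ C / 2 * (‖fourierCoeffOn hab f' n‖ ^ 2 + 1 / (n : ℝ) ^ 2) := by
    intro n hn
    rw [fourierCoeffOn_of_hasDeriv_right hab hn (by rwa [uIcc_of_le hab.le])
      (by rwa [min_eq_left hab.le, max_eq_right hab.le]) hf'int, hfab, sub_self, mul_zero,
      zero_sub]
    have hn' : (0 : ℝ) < |(n : ℝ)| := abs_pos.2 (Int.cast_ne_zero.2 hn)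
    have hnorm : ‖1 / (-2 * π * I * n) * -((b - a) * fourierCoeffOn hab f' n)‖
        = C * (‖fourierCoeffOn hab f' n‖ * (1 / |(n : ℝ)|)) := by
      rw [← ofReal_sub]
      simp only [C, norm_mul, norm_neg, norm_div, norm_one, norm_I, norm_real, Complex.norm_two,
        norm_intCast, Real.norm_eq_abs, abs_of_pos Real.pi_pos,
        abs_of_pos (sub_pos.2 hab)]
      ring
    rw [hnorm]
    have hamgm := two_mul_le_add_sq ‖fourierCoeffOn hab f' n‖ (1 / |(n : ℝ)|)
    rw [div_pow, sq_abs] at hamgm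
    have hC : 0 ≤ C := by positivity
    nlinarith
  refine Summable.of_norm_bounded_eventually
    (((hasSum_sq_fourierCoeffOn hab hf').summable.add
      (Real.summable_one_div_int_pow.2 one_lt_two)).mul_left (C / 2)) ?_
  filter_upwards [eventually_cofinite_ne 0] with n hn
  rw [norm_norm]
  exact hbound n hn

noncomputable def truncExp (g t ω : ℝ) : ℂ :=
  if |ω| ≤ g then exp (I * ω * t) else 1

section truncExp

variable {g t : ℝ}

theorem exp_I_mul_mul_eq_one_of_abs_eq (hgt : exp (I * (g * t)) = 1) {x : ℝ} (hx : |x| = g) :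
    exp (I * x * t) = 1 := by
  rcases eq_or_eq_neg_of_abs_eq hx with rfl | rfl
  · rw [mul_assoc, hgt]
  · rw [ofReal_neg, mul_neg, neg_mul, mul_assoc, exp_neg, hgt, inv_one]

theorem truncExp_of_abs_le {ω : ℝ} (h : |ω| ≤ g) : truncExp g t ω = exp (I * ω * t) :=
  if_pos h

theorem truncExp_of_le_abs (hgt : exp (I * (g * t)) = 1) {ω : ℝ} (h : g ≤ |ω|) :
    truncExp g t ω = 1 := by
  unfold truncExp
  split_ifs with h'
  · exact exp_I_mul_mul_eq_one_of_abs_eq hgt (le_antisymm h' h)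
  · rfl

theorem continuous_truncExp (hgt : exp (I * (g * t)) = 1) : Continuous (truncExp g t) :=
  Continuous.if_le (by fun_prop) continuous_const continuous_abs continuous_const
    fun _ hx => exp_I_mul_mul_eq_one_of_abs_eq hgt hx

theorem hasDerivWithinAt_truncExp (hgt : exp (I * (g * t)) = 1) (x : ℝ) :
    HasDerivWithinAt (truncExp g t)
      ((Ico (-g) g).indicator (fun ω => I * t * exp (I * ω * t)) x) (Ioi x) x := by
  by_cases hx : x ∈ Ico (-g) g
  · rw [indicator_of_mem hx]
    have hexp : HasDerivAt (fun y : ℝ => exp (I * y * t)) (I * t * exp (I * x * t)) x := by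
      have hlin : HasDerivAt (fun y : ℝ => I * y * t) (I * t) x := by
        simpa using ((hasDerivAt_id x).ofReal_comp.const_mul I).mul_const (t : ℂ)
      convert hlin.cexp using 1
      ring
    refine hexp.hasDerivWithinAt.congr_of_eventuallyEq ?_
      (truncExp_of_abs_le (abs_le.2 ⟨hx.1, hx.2.le⟩))
    filter_upwards [self_mem_nhdsWithin, nhdsWithin_le_nhds (Iio_mem_nhds hx.2)] with y hxy hyg
    exact truncExp_of_abs_le (abs_le.2 ⟨hx.1.trans hxy.le, hyg.le⟩)
  · rw [indicator_of_notMem hx]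
    have hfar : ∀ᶠ y in 𝓝[≥] x, g ≤ |y| := by
      rcases not_and_or.1 hx with hlt | hle
      · filter_upwards [nhdsWithin_le_nhds (Iio_mem_nhds (not_le.1 hlt))] with y hy
        exact le_abs.2 (Or.inr (by linarith [mem_Iio.1 hy]))
      · filter_upwards [self_mem_nhdsWithin] with y hy
        exact (not_lt.1 hle).trans (le_trans hy (le_abs_self y))
    exact (hasDerivWithinAt_const x _ 1).congr_of_eventuallyEq
      ((nhdsWithin_mono _ Ioi_subset_Ici_self) (hfar.mono fun y => truncExp_of_le_abs hgt))
      (truncExp_of_le_abs hgt (hfar.self_of_nhdsWithin self_mem_Ici))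

theorem memLp_indicator_exp {μ : Measure ℝ} [IsFiniteMeasure μ] {s : Set ℝ}
    (hs : MeasurableSet s) (p : ENNReal) :
    MemLp (s.indicator fun ω => I * t * exp (I * ω * t)) p μ := by
  refine MemLp.of_bound ((by fun_prop : Continuous fun ω : ℝ => I * t * exp (I * ω * t))
    |>.aestronglyMeasurable.indicator hs) |t| (ae_of_all _ fun ω => ?_)
  refine (norm_indicator_le_norm_self _ ω).trans_eq ?_
  rw [show I * ω * t = ((ω * t : ℝ) : ℂ) * I by push_cast; ring, norm_mul, norm_mul,
    norm_exp_ofReal_mul_I, norm_I, norm_real, Real.norm_eq_abs, one_mul, mul_one]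

end truncExp

theorem fourier_coe_apply_neg_pi_pi (n : ℤ) (x : ℝ) :
    fourier n (x : AddCircle (π - -π)) = exp (I * n * x) := by
  rw [fourier_coe_apply]
  congr 1
  push_cast
  field_simp
  ring

theorem fourierCoeffOn_neg_pi_pi (f : ℝ → ℂ) (n : ℤ) :
    fourierCoeffOn (neg_lt_self Real.pi_pos) f n
      = 1 / (2 * π) * ∫ ω in -π..π, f ω * exp (-I * n * ω) := by
  rw [fourierCoeffOn_eq_integral, real_smul]
  congr 1
  · push_cast; ring
  · refine intervalIntegral.integral_congr fun ω _ => ?_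
    rw [fourier_coe_apply_neg_pi_pi, smul_eq_mul, mul_comm]
    push_cast
    ring_nf

theorem fourier_series_reproduces_exponential_general (Ω₁ : ℝ)
    (t g : ℝ) (hg : Ω₁ ≤ g) (hgπ : g ≤ π)
    (hgt : Complex.exp (Complex.I * (g * t)) = 1)
    (E : ℝ → ℂ)
    (hE : ∀ ω : ℝ, E ω = if |ω| ≤ g then Complex.exp (Complex.I * ω * t) else 1)
    (a : ℤ → ℂ)
    (ha : ∀ k : ℤ, a k = (1 / (2 * (π : ℂ))) *
      ∫ ω in (-π)..π, E ω * Complex.exp (-Complex.I * k * ω)) :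
    ∀ ω : ℝ, |ω| ≤ Ω₁ →
      Summable (fun k : ℤ => ‖a k * Complex.exp (Complex.I * k * ω)‖) ∧
      ∑' k : ℤ, a k * Complex.exp (Complex.I * k * ω) = Complex.exp (Complex.I * ω * t) := by
  intro ω hω
  have hπ : -π < π := neg_lt_self Real.pi_pos
  obtain rfl : E = truncExp g t := funext hE
  obtain rfl : a = fourierCoeffOn hπ (truncExp g t) :=
    funext fun k => (ha k).trans (fourierCoeffOn_neg_pi_pi _ k).symm
  have hcont := (continuous_truncExp hgt).continuousOn (s := Icc (-π) π)
  have hends : truncExp g t (-π) = truncExp g t π := by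
    have hπg : g ≤ |π| := hgπ.trans (le_abs_self π)
    rw [truncExp_of_le_abs hgt (by rwa [abs_neg]), truncExp_of_le_abs hgt hπg]
  have hsum := summable_norm_fourierCoeffOn_of_hasDeriv_right hπ hcont hends
    (fun x _ => hasDerivWithinAt_truncExp hgt x)
    (memLp_indicator_exp measurableSet_Ico 2)
  have hωg : |ω| ≤ g := hω.trans hg
  have hseries := hasSum_fourierCoeffOn_of_summable hπ hcont hends hsum.of_norm
    (abs_le.1 (hωg.trans hgπ))
  simp only [fourier_coe_apply_neg_pi_pi, smul_eq_mul, truncExp_of_abs_le hωg] at hseries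
  refine ⟨hsum.congr fun k => ?_, hseries.tsum_eq⟩
  rw [norm_mul, mul_assoc, ← ofReal_intCast, ← ofReal_mul, norm_exp_I_mul_ofReal, mul_one]

theorem fourier_series_reproduces_exponential (Ω₁ : ℝ) (hΩ₁ : 0 < Ω₁) (hΩ₁π : Ω₁ < π)
    (t g : ℝ) (hg : Ω₁ ≤ g) (hgπ : g ≤ π)
    (hgt : Complex.exp (Complex.I * (g * t)) = 1)
    (E : ℝ → ℂ)
    (hE : ∀ ω : ℝ, E ω = if |ω| ≤ g then Complex.exp (Complex.I * ω * t) else 1)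
    (a : ℤ → ℂ)
    (ha : ∀ k : ℤ, a k = (1 / (2 * (π : ℂ))) *
      ∫ ω in (-π)..π, E ω * Complex.exp (-Complex.I * k * ω)) :
    ∀ ω : ℝ, |ω| ≤ Ω₁ →
      Summable (fun k : ℤ => ‖a k * Complex.exp (Complex.I * k * ω)‖) ∧
      ∑' k : ℤ, a k * Complex.exp (Complex.I * k * ω) = Complex.exp (Complex.I * ω * t) :=
  fourier_series_reproduces_exponential_general Ω₁ t g hg hgπ hgt E hE a ha
end

section
/- Let x ∈ L²(ℝ) ∩ C(ℝ) be band-limited with Fourier transform supported in [−Ω, Ω] for some Ω ∈ (0, π), let N be a positive even integer with N > Ω/(π−Ω), let g be the 1-periodic extension of g(t) = πN/t from [N, N+1), and define a_m(t) = 1 − g(t)/π and a_k(t) = (t−m)sin(g(t)(k−m))/(π(k−m)(k−t)) for k ≠ m when t ∈ [N+m, N+m+1). Then for every t ∈ ℝ, x(t) = ∑_{k∈ℤ} a_k(t)·x(k), and the series converges absolutely. -/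
open Real MeasureTheory

open Complex (I)
open scoped Complex

/-!
For non-integer `t` write `t = M + τ` with `M = ⌊t⌋ - N` and `τ ∈ (N, N + 1)`, and put
`g = πN / τ`, so that `Ω < g < π` and `gτ = πN ∈ 2πℤ`. The function on `[-π, π]` equal to
`e^{iωτ}` for `|ω| ≤ g` and to `1` elsewhere therefore extends to a continuous `2π`-periodic
function. Its Fourier coefficients are the weights `a_{M+n}(t)`, which decay like `1/n²`, so its
Fourier series converges absolutely to `e^{iωτ}` on `[-g, g] ⊇ [-Ω, Ω]`. Multiplying by
`e^{iωM} F(ω)` and integrating term by term (dominated by `∑ |a_k(t)| ∫ |F|`) turns the identity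
`e^{iωt} = ∑ a_k(t) e^{iωk}` into `x(t) = ∑ a_k(t) x(k)`. At integer `t` the weights are a
Kronecker delta.
-/

lemma mul_sinc_mul_eq_sin_div {c : ℝ} (hc : c ≠ 0) (g : ℝ) :
    g * sinc (c * g) = Real.sin (c * g) / c := by
  rcases eq_or_ne g 0 with rfl | hg
  · simp
  · rw [sinc_of_ne_zero (mul_ne_zero hc hg)]
    field_simp

lemma integral_cexp_I_mul_eq_sinc (c g : ℝ) :
    ∫ x in -g..g, cexp (I * c * x) = 2 * g * sinc (c * g) := by
  rcases eq_or_ne c 0 with rfl | hc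
  · simp only [Complex.ofReal_zero, mul_zero, zero_mul, Complex.exp_zero, sinc_zero,
      intervalIntegral.integral_const, sub_neg_eq_add, Complex.real_smul, mul_one]
    push_cast
    ring
  have hIc : I * c ≠ 0 := mul_ne_zero Complex.I_ne_zero (by exact_mod_cast hc)
  have hexp (y : ℝ) : cexp (I * c * y) = Real.cos (c * y) + Real.sin (c * y) * I := by
    rw [show I * c * y = ((c * y : ℝ) : ℂ) * I by push_cast; ring, Complex.exp_mul_I,
      ← Complex.ofReal_cos, ← Complex.ofReal_sin]
  rw [integral_exp_mul_complex hIc, hexp, hexp,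
    show (2 : ℂ) * g * sinc (c * g) = 2 * ((g * sinc (c * g) : ℝ) : ℂ) by push_cast; ring,
    mul_sinc_mul_eq_sin_div hc]
  simp only [mul_neg, Real.cos_neg, Real.sin_neg]
  push_cast
  field_simp
  ring

lemma intervalIntegral_indicator_Icc {E : Type*} [NormedAddCommGroup E] [NormedSpace ℝ E]
    {f : ℝ → E} {a b c d : ℝ} (hac : a < c) (hcd : c ≤ d) (hdb : d ≤ b) :
    ∫ x in a..b, (Set.Icc c d).indicator f x = ∫ x in c..d, f x := by
  rw [intervalIntegral.integral_of_le (by linarith), intervalIntegral.integral_of_le hcd,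
    setIntegral_indicator measurableSet_Icc,
    Set.inter_eq_right.mpr (Set.Icc_subset_Ioc hac hdb), integral_Icc_eq_integral_Ioc]

lemma norm_cexp_I_mul_mul (a b : ℝ) : ‖cexp (I * a * b)‖ = 1 := by
  rw [mul_assoc, ← Complex.ofReal_mul, Complex.norm_exp_I_mul_ofReal]

noncomputable def clippedExp (g τ ω : ℝ) : ℂ :=
  if |ω| ≤ g then cexp (I * ω * τ) else 1

lemma continuous_clippedExp {g τ : ℝ} (hgτ : Real.cos (g * τ) = 1) :
    Continuous (clippedExp g τ) := by
  refine Continuous.if_le (by fun_prop) continuous_const continuous_abs continuous_const ?_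
  intro ω hω
  have hsin : Real.sin (g * τ) = 0 := Real.sin_eq_zero_iff_cos_eq.mpr (Or.inl hgτ)
  have hg : 0 ≤ g := hω ▸ abs_nonneg ω
  rw [show I * ω * τ = ((ω * τ : ℝ) : ℂ) * I by push_cast; ring, Complex.exp_mul_I,
    ← Complex.ofReal_cos, ← Complex.ofReal_sin]
  rcases (abs_eq hg).mp hω with rfl | rfl <;> simp [hgτ, hsin]

lemma integral_cexp_mul_clippedExp {g : ℝ} (hg0 : 0 ≤ g) (hgπ : g < π) (τ c : ℝ) :
    ∫ x in -π..π, cexp (I * c * x) * clippedExp g τ x =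
      ((2 * π * sinc (c * π) + 2 * g * (sinc ((c + τ) * g) - sinc (c * g)) : ℝ) : ℂ) := by
  have hsplit (x : ℝ) : cexp (I * c * x) * clippedExp g τ x = cexp (I * c * x) +
      (Set.Icc (-g) g).indicator (fun x : ℝ => cexp (I * ↑(c + τ) * x) - cexp (I * c * x)) x := by
    by_cases hx : |x| ≤ g
    · rw [clippedExp, if_pos hx, Set.indicator_of_mem (Set.mem_Icc.mpr (abs_le.mp hx)),
        ← Complex.exp_add]
      push_cast
      ring_nf
    · rw [clippedExp, if_neg hx,
        Set.indicator_of_notMem fun h => hx (abs_le.mpr (Set.mem_Icc.mp h)), mul_one, add_zero]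
  have hcont (b : ℝ) : Continuous fun x : ℝ => cexp (I * b * x) := by fun_prop
  have hdiff : Continuous fun x : ℝ => cexp (I * ↑(c + τ) * x) - cexp (I * c * x) := by fun_prop
  simp_rw [hsplit]
  rw [intervalIntegral.integral_add ((hcont c).intervalIntegrable _ _)
      ((hdiff.integrableOn_uIcc.indicator measurableSet_Icc).intervalIntegrable),
    intervalIntegral_indicator_Icc (neg_lt_neg hgπ) (by linarith) hgπ.le,
    intervalIntegral.integral_sub ((hcont _).intervalIntegrable _ _)
      ((hcont c).intervalIntegrable _ _),
    integral_cexp_I_mul_eq_sinc, integral_cexp_I_mul_eq_sinc, integral_cexp_I_mul_eq_sinc]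
  push_cast
  ring

noncomputable def samplingCoeff (g τ : ℝ) (n : ℤ) : ℝ :=
  if n = 0 then 1 - g / π else τ * Real.sin (g * n) / (π * n * (n - τ))

lemma samplingCoeff_pi (τ : ℝ) (n : ℤ) : samplingCoeff π τ n = 0 := by
  rcases eq_or_ne n 0 with rfl | hn
  · simp [samplingCoeff, pi_ne_zero]
  · simp [samplingCoeff, hn, mul_comm π, sin_int_mul_pi]

lemma sinc_add_mul_sub_sinc_eq_samplingCoeff {g τ : ℝ} (hgτ : Real.cos (g * τ) = 1)
    (hτ : ∀ j : ℤ, τ ≠ j) (n : ℤ) :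
    sinc (n * π) + g / π * (sinc ((τ - n) * g) - sinc (n * g)) = samplingCoeff g τ n := by
  have hsin : Real.sin (g * τ) = 0 := Real.sin_eq_zero_iff_cos_eq.mpr (Or.inl hgτ)
  have hτn : τ - n ≠ 0 := sub_ne_zero.mpr (hτ n)
  have hshift : g * sinc ((τ - n) * g) = -Real.sin (g * n) / (τ - n) := by
    rw [mul_sinc_mul_eq_sin_div hτn, show (τ - n) * g = g * τ - g * n by ring, Real.sin_sub, hsin,
      hgτ]
    ring
  rcases eq_or_ne n 0 with rfl | hn
  · rw [samplingCoeff, if_pos rfl, mul_sub, ← mul_div_right_comm, ← mul_div_right_comm, hshift]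
    simp only [Int.cast_zero, zero_mul, sinc_zero, mul_zero, sin_zero, neg_zero, sub_zero,
      zero_div, mul_one, zero_sub]
    ring
  · have hnR : (n : ℝ) ≠ 0 := Int.cast_ne_zero.mpr hn
    have hnτ : (n : ℝ) - τ ≠ 0 := fun h => hτn (by linarith)
    rw [samplingCoeff, if_neg hn, sinc_of_ne_zero (mul_ne_zero hnR pi_ne_zero), sin_int_mul_pi,
      mul_sub, ← mul_div_right_comm, ← mul_div_right_comm, hshift,
      mul_sinc_mul_eq_sin_div hnR, mul_comm (n : ℝ) g]
    field_simp
    ring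

lemma summable_abs_samplingCoeff (g τ : ℝ) : Summable fun n : ℤ => |samplingCoeff g τ n| := by
  refine Summable.of_norm_bounded_eventually
    ((summable_one_div_int_pow.mpr one_lt_two).mul_left (2 * |τ| / π)) ?_
  filter_upwards [(tendsto_norm_cocompact_atTop.comp Int.tendsto_coe_cofinite).eventually_ge_atTop
    (2 * |τ|), Filter.eventually_cofinite_ne 0] with n hfar hn
  rw [Function.comp_apply, Real.norm_eq_abs] at hfar
  have hnR : (n : ℝ) ≠ 0 := Int.cast_ne_zero.mpr hn
  have hsep : |(n : ℝ)| / 2 ≤ |(n : ℝ) - τ| := by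
    linarith [abs_sub_abs_le_abs_sub (n : ℝ) τ]
  rw [Real.norm_eq_abs, abs_abs, samplingCoeff, if_neg hn, abs_div, abs_mul, abs_mul, abs_mul,
    abs_of_pos pi_pos]
  calc |τ| * |Real.sin (g * n)| / (π * |(n : ℝ)| * |(n : ℝ) - τ|)
      ≤ |τ| * 1 / (π * |(n : ℝ)| * (|(n : ℝ)| / 2)) := by
        gcongr
        exact abs_sin_le_one _
    _ = 2 * |τ| / π * (1 / (n : ℝ) ^ 2) := by
        rw [← sq_abs (n : ℝ)]
        field_simp

section FourierSeries

local instance : Fact (0 < 2 * π) := ⟨two_pi_pos⟩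

lemma fourier_coe_two_pi (n : ℤ) (x : ℝ) :
    fourier n (x : AddCircle (2 * π)) = cexp (I * n * x) := by
  rw [fourier_coe_apply]
  congr 1
  field_simp [Complex.ofReal_ne_zero.mpr pi_ne_zero]
  push_cast
  ring

lemma fourierCoeff_liftIco_clippedExp {g : ℝ} (hg0 : 0 ≤ g) (hgπ : g < π) (τ : ℝ) (n : ℤ) :
    fourierCoeff (AddCircle.liftIco (2 * π) (-π) (clippedExp g τ)) n =
      ((sinc (n * π) + g / π * (sinc ((τ - n) * g) - sinc (n * g)) : ℝ) : ℂ) := by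
  have hintegrand : Set.EqOn
      (fun x : ℝ => fourier (-n) (x : AddCircle (2 * π)) •
        AddCircle.liftIco (2 * π) (-π) (clippedExp g τ) x)
      (fun x : ℝ => cexp (I * ↑(-n : ℝ) * x) * clippedExp g τ x) (Set.Ioo (-π) (-π + 2 * π)) := by
    intro x hx
    dsimp only
    rw [smul_eq_mul, fourier_coe_two_pi, AddCircle.liftIco_coe_apply (Set.Ioo_subset_Ico_self hx)]
    push_cast
    rfl
  rw [fourierCoeff_eq_intervalIntegral _ n (-π),
    intervalIntegral.integral_congr_Ioo_of_le (by linarith [pi_pos]) hintegrand,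
    show -π + 2 * π = π by ring, integral_cexp_mul_clippedExp hg0 hgπ]
  simp only [neg_mul, sinc_neg, neg_add_eq_sub]
  rw [Complex.real_smul]
  push_cast
  field_simp

lemma hasSum_samplingCoeff_mul_cexp {g τ : ℝ} (hg0 : 0 ≤ g) (hgπ : g < π)
    (hgτ : Real.cos (g * τ) = 1) (hτ : ∀ j : ℤ, τ ≠ j) {ω : ℝ} (hω : |ω| ≤ g) :
    HasSum (fun n : ℤ => (samplingCoeff g τ n : ℂ) * cexp (I * n * ω)) (cexp (I * ω * τ)) := by
  have hend : clippedExp g τ (-π) = clippedExp g τ (-π + 2 * π) := by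
    simp only [clippedExp, abs_neg, show -π + 2 * π = π by ring, abs_of_pos pi_pos,
      if_neg hgπ.not_ge]
  let f : C(AddCircle (2 * π), ℂ) :=
    ⟨_, AddCircle.liftIco_continuous hend (continuous_clippedExp hgτ).continuousOn⟩
  have hcoeff (n : ℤ) : fourierCoeff f n = samplingCoeff g τ n := by
    rw [← sinc_add_mul_sub_sinc_eq_samplingCoeff hgτ hτ n]
    exact fourierCoeff_liftIco_clippedExp hg0 hgπ τ n
  have hsummable : Summable (fourierCoeff f) := by
    refine Summable.of_norm ((summable_abs_samplingCoeff g τ).congr fun n => ?_)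
    rw [hcoeff, Complex.norm_real, Real.norm_eq_abs]
  have hfω : f ω = cexp (I * ω * τ) := by
    have hmem : ω ∈ Set.Ico (-π) (-π + 2 * π) := by
      constructor <;> linarith [abs_le.mp hω]
    change AddCircle.liftIco (2 * π) (-π) (clippedExp g τ) ω = _
    rw [AddCircle.liftIco_coe_apply hmem, clippedExp, if_pos hω]
  convert has_pointwise_sum_fourier_series_of_summable hsummable (ω : AddCircle (2 * π)) using 1
  · ext n
    rw [hcoeff, smul_eq_mul, fourier_coe_two_pi]
  · exact hfω.symm

end FourierSeries

def IsSamplingSeries (Ω t : ℝ) (c : ℤ → ℂ) : Prop :=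
  (Summable fun k => ‖c k‖) ∧
    ∀ ω : ℝ, |ω| ≤ Ω → HasSum (fun k : ℤ => c k * cexp (I * ω * (k : ℝ))) (cexp (I * ω * t))

lemma isSamplingSeries_ite (Ω : ℝ) (j : ℤ) :
    IsSamplingSeries Ω j fun k => if k = j then 1 else 0 := by
  refine ⟨(hasSum_single j fun k hk => by simp [hk]).summable, fun ω _ => ?_⟩
  simpa using hasSum_single
    (f := fun k : ℤ => (if k = j then 1 else 0 : ℂ) * cexp (I * ω * (k : ℝ))) j
    fun k hk => by simp [hk]

lemma isSamplingSeries_samplingCoeff_sub {Ω g τ : ℝ} (hg0 : 0 ≤ g) (hgπ : g < π) (hΩg : Ω ≤ g)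
    (hgτ : Real.cos (g * τ) = 1) (hτ : ∀ j : ℤ, τ ≠ j) (M : ℤ) :
    IsSamplingSeries Ω (M + τ) fun k => samplingCoeff g τ (k - M) := by
  refine ⟨?_, fun ω hω => ?_⟩
  · simpa only [Complex.norm_real, Real.norm_eq_abs, Function.comp_def, Equiv.subRight_apply] using
      (Equiv.subRight M).summable_iff.mpr (summable_abs_samplingCoeff g τ)
  have h := (hasSum_samplingCoeff_mul_cexp hg0 hgπ hgτ hτ (hω.trans hΩg)).mul_right
    (cexp (I * ω * (M : ℝ)))
  rw [show I * ω * ((M + τ : ℝ) : ℂ) = I * ω * τ + I * ω * (M : ℝ) by push_cast; ring,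
    Complex.exp_add]
  refine ((Equiv.subRight M).hasSum_iff.mpr h).congr_fun fun k => ?_
  rw [Function.comp_apply, Equiv.subRight_apply, mul_assoc (samplingCoeff g τ (k - M) : ℂ),
    ← Complex.exp_add]
  congr 2
  push_cast
  ring

lemma isSamplingSeries_of_mem_Ioo {Ω : ℝ} (hΩπ : Ω < π) {N : ℤ} (hN : 0 < N) (hNe : Even N)
    (hNΩ : Ω / (π - Ω) < N) {τ : ℝ} (hτ : τ ∈ Set.Ioo (N : ℝ) (N + 1)) (M : ℤ) :
    IsSamplingSeries Ω (M + τ) fun k => samplingCoeff (π * N / τ) τ (k - M) := by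
  obtain ⟨hNτ, hτN⟩ := hτ
  have hN0 : (0 : ℝ) < N := by exact_mod_cast hN
  have hτ0 : 0 < τ := hN0.trans hNτ
  have hΩN : Ω < N * (π - Ω) := (div_lt_iff₀ (sub_pos.mpr hΩπ)).mp hNΩ
  have hgπ : π * N / τ < π := by
    rw [div_lt_iff₀ hτ0]
    nlinarith [pi_pos]
  have hΩg : Ω < π * N / τ := by
    rw [lt_div_iff₀ hτ0]
    rcases le_or_gt Ω 0 with hΩ | hΩ <;> nlinarith [pi_pos]
  have hgτ : Real.cos (π * N / τ * τ) = 1 := by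
    obtain ⟨r, rfl⟩ := hNe
    rw [div_mul_cancel₀ _ hτ0.ne', show π * ((r + r : ℤ) : ℝ) = r * (2 * π) by push_cast; ring,
      cos_int_mul_two_pi]
  have hτZ (j : ℤ) : τ ≠ j := by
    rintro rfl
    have h1 : N < j := by exact_mod_cast hNτ
    have h2 : j < N + 1 := by exact_mod_cast hτN
    omega
  exact isSamplingSeries_samplingCoeff_sub (by positivity) hgπ hΩg.le hgτ hτZ M

section FourierRepresentation

variable {x F : ℝ → ℂ}

lemma integral_cexp_mul_eq_of_fourier_rep
    (hrep : ∀ t : ℝ, x t = (1 / (2 * (π : ℂ))) * ∫ ω : ℝ, cexp (I * ω * t) * F ω) (s : ℝ) :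
    ∫ ω : ℝ, cexp (I * ω * s) * F ω = 2 * π * x s := by
  have h2π : (2 * π : ℂ) ≠ 0 := mul_ne_zero two_ne_zero (Complex.ofReal_ne_zero.mpr pi_ne_zero)
  rw [hrep s, ← mul_assoc, mul_one_div_cancel h2π, one_mul]

lemma norm_le_of_fourier_rep
    (hrep : ∀ t : ℝ, x t = (1 / (2 * (π : ℂ))) * ∫ ω : ℝ, cexp (I * ω * t) * F ω) (s : ℝ) :
    ‖x s‖ ≤ (2 * π)⁻¹ * ∫ ω, ‖F ω‖ := by
  have hnorm : ‖(1 / (2 * (π : ℂ)))‖ = (2 * π)⁻¹ := by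
    rw [one_div, norm_inv, norm_mul, Complex.norm_real, Complex.norm_two,
      Real.norm_of_nonneg pi_pos.le]
  rw [hrep s, norm_mul, hnorm]
  gcongr
  refine (norm_integral_le_integral_norm _).trans_eq (integral_congr_ae (ae_of_all _ fun ω => ?_))
  simp only [norm_mul, norm_cexp_I_mul_mul, one_mul]

lemma summable_norm_mul_of_fourier_rep
    (hrep : ∀ t : ℝ, x t = (1 / (2 * (π : ℂ))) * ∫ ω : ℝ, cexp (I * ω * t) * F ω)
    {c : ℤ → ℂ} (hc : Summable fun k => ‖c k‖) : Summable fun k : ℤ => ‖c k * x k‖ :=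
  (hc.mul_right _).of_nonneg_of_le (fun _ => norm_nonneg _) fun k => by
    rw [norm_mul]
    gcongr
    exact norm_le_of_fourier_rep hrep k

lemma IsSamplingSeries.hasSum_mul_of_fourier_rep {Ω t : ℝ} {c : ℤ → ℂ}
    (hc : IsSamplingSeries Ω t c) (hF : Integrable F) (hsupp : ∀ ω : ℝ, Ω < |ω| → F ω = 0)
    (hrep : ∀ t : ℝ, x t = (1 / (2 * (π : ℂ))) * ∫ ω : ℝ, cexp (I * ω * t) * F ω) :
    HasSum (fun k => c k * x k) (x t) := by
  set G : ℤ → ℝ → ℂ := fun k ω => c k * (cexp (I * ω * (k : ℝ)) * F ω)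
  have hmodulated (s : ℝ) : Integrable fun ω : ℝ => cexp (I * ω * s) * F ω :=
    hF.bdd_mul (c := 1) (by fun_prop : Continuous _).aestronglyMeasurable
      (ae_of_all _ fun ω => (norm_cexp_I_mul_mul ω s).le)
  have hG_norm (k : ℤ) : ∫ ω, ‖G k ω‖ = ‖c k‖ * ∫ ω, ‖F ω‖ := by
    rw [← integral_const_mul]
    simp only [G, norm_mul, norm_cexp_I_mul_mul, one_mul]
  have hG_sum (ω : ℝ) : ∑' k, G k ω = cexp (I * ω * t) * F ω := by
    by_cases hω : F ω = 0
    · simp [G, hω]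
    · have hband : |ω| ≤ Ω := not_lt.mp fun h => hω (hsupp ω h)
      simpa only [G, mul_assoc] using ((hc.2 ω hband).mul_right (F ω)).tsum_eq
  have h := hasSum_integral_of_summable_integral_norm (fun k : ℤ => (hmodulated k).const_mul (c k))
    ((hc.1.mul_right _).congr fun k => (hG_norm k).symm)
  simp only [G, hG_sum, integral_const_mul, integral_cexp_mul_eq_of_fourier_rep hrep] at h
  have h2π : (2 * π : ℂ) ≠ 0 := mul_ne_zero two_ne_zero (Complex.ofReal_ne_zero.mpr pi_ne_zero)
  have h' := h.mul_left (2 * π : ℂ)⁻¹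
  rw [inv_mul_cancel_left₀ h2π] at h'
  exact h'.congr_fun fun k => by rw [mul_left_comm, inv_mul_cancel_left₀ h2π]

end FourierRepresentation

theorem modified_sampling_theorem_L2_general (Ω : ℝ) (hΩπ : Ω < π)
    (N : ℤ) (hN : 0 < N) (hNe : Even N) (hNΩ : (N : ℝ) > Ω / (π - Ω))
    (x : ℝ → ℂ)
    (F : ℝ → ℂ) (hFi : Integrable F)
    (hsupp : ∀ ω : ℝ, Ω < |ω| → F ω = 0)
    (hrep : ∀ t : ℝ, x t = (1 / (2 * (π : ℂ))) * ∫ ω : ℝ, Complex.exp (Complex.I * ω * t) * F ω)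
    (m : ℝ → ℤ) (hm : ∀ t : ℝ, m t = ⌊t⌋ - N)
    (g : ℝ → ℝ) (hg : ∀ t : ℝ, g t = π * N / (t - m t))
    (a : ℤ → ℝ → ℝ)
    (ha : ∀ (k : ℤ) (t : ℝ), a k t =
      if t = (k : ℝ) then 1
      else if k = m t then 1 - g t / π
      else (t - m t) * Real.sin (g t * ((k : ℝ) - m t)) /
        (π * ((k : ℝ) - m t) * ((k : ℝ) - t))) :
    ∀ t : ℝ, Summable (fun k : ℤ => ‖(a k t : ℂ) * x k‖) ∧
      HasSum (fun k : ℤ => (a k t : ℂ) * x k) (x t) := by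
  intro t
  have hak (k : ℤ) : a k t = if t = k then 1 else samplingCoeff (g t) (t - m t) (k - m t) := by
    simp only [ha, samplingCoeff, sub_eq_zero, Int.cast_sub, sub_sub_sub_cancel_right]
  suffices hc : IsSamplingSeries Ω t fun k => (a k t : ℂ) from
    ⟨summable_norm_mul_of_fourier_rep hrep hc.1, hc.hasSum_mul_of_fourier_rep hFi hsupp hrep⟩
  by_cases hint : ∃ j : ℤ, t = j
  · obtain ⟨j, rfl⟩ := hint
    have hgj : g j = π := by
      have hN0 : (N : ℝ) ≠ 0 := by exact_mod_cast hN.ne'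
      rw [hg, hm, Int.floor_intCast, Int.cast_sub, sub_sub_cancel, mul_div_cancel_right₀ _ hN0]
    have hδ (k : ℤ) : (a k j : ℂ) = if k = j then 1 else 0 := by
      rw [hak, hgj, samplingCoeff_pi]
      split_ifs <;> simp_all [eq_comm]
    simpa only [hδ] using isSamplingSeries_ite Ω j
  · have hτ : t - m t ∈ Set.Ioo (N : ℝ) (N + 1) := by
      have hfract : Int.fract t ≠ 0 := fun h => hint ⟨⌊t⌋, by linarith [Int.self_sub_floor t]⟩
      rw [hm]
      push_cast
      constructor <;> linarith [(Int.fract_nonneg t).lt_of_ne' hfract, Int.fract_lt_one t,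
        Int.self_sub_floor t]
    have hak' (k : ℤ) : a k t = samplingCoeff (π * N / (t - m t)) (t - m t) (k - m t) := by
      rw [hak, if_neg fun h => hint ⟨k, h⟩, hg]
    simpa [hak'] using isSamplingSeries_of_mem_Ioo hΩπ hN hNe hNΩ hτ (m t)

theorem modified_sampling_theorem_L2 (Ω : ℝ) (hΩ0 : 0 < Ω) (hΩπ : Ω < π)
    (N : ℤ) (hN : 0 < N) (hNe : Even N) (hNΩ : (N : ℝ) > Ω / (π - Ω))
    (x : ℝ → ℂ) (hx : Continuous x) (hx2 : MemLp x 2 volume)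
    (F : ℝ → ℂ) (hFi : Integrable F) (hF2 : MemLp F 2 volume)
    (hsupp : ∀ ω : ℝ, Ω < |ω| → F ω = 0)
    (hrep : ∀ t : ℝ, x t = (1 / (2 * (π : ℂ))) * ∫ ω : ℝ, Complex.exp (Complex.I * ω * t) * F ω)
    (m : ℝ → ℤ) (hm : ∀ t : ℝ, m t = ⌊t⌋ - N)
    (g : ℝ → ℝ) (hg : ∀ t : ℝ, g t = π * N / (t - m t))
    (a : ℤ → ℝ → ℝ)
    (ha : ∀ (k : ℤ) (t : ℝ), a k t =
      if t = (k : ℝ) then 1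
      else if k = m t then 1 - g t / π
      else (t - m t) * Real.sin (g t * ((k : ℝ) - m t)) /
        (π * ((k : ℝ) - m t) * ((k : ℝ) - t))) :
    ∀ t : ℝ, Summable (fun k : ℤ => ‖(a k t : ℂ) * x k‖) ∧
      HasSum (fun k : ℤ => (a k t : ℂ) * x k) (x t) :=
  modified_sampling_theorem_L2_general Ω hΩπ N hN hNe hNΩ x F hFi hsupp hrep m hm g hg a ha
end
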